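/- Let {f_t : t ∈ T} ⊂ Γ₀(X) be a nonempty family, f := sup_{t∈T} f_t, and x ∈ dom f. Assume the standard hypothesis (SH) holds and that the mapping t ↦ f_t(x) is additionally lower semicontinuous on T. Then inf_{t∈T} f_t(x) > −∞, and consequently N_{dom f}(x) = [ co‾( ⋃_{t∈T} ∂_ε f_t(x) ) ]_∞ for every ε > 0. -/

import Mathlib

open Set Pointwise Topology
open scoped Classical

noncomputable section

variable {X : Type*} [AddCommGroup X] [Module ℝ X] [TopologicalSpace X]
  [IsTopologicalAddGroup X] [ContinuousSMul ℝ X] [LocallyConvexSpace ℝ X] [T2Space X]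

/-- Convexity for extended-real-valued functions. -/
def EConvexOn' (f : X → EReal) : Prop :=
  ∀ x y : X, ∀ a b : ℝ, 0 ≤ a → 0 ≤ b → a + b = 1 →
    f (a • x + b • y) ≤ (a : EReal) * f x + (b : EReal) * f y

/-- `f ∈ Γ₀(X)`: proper, convex and lower semicontinuous. -/
def Gamma0 (f : X → EReal) : Prop :=
  (∀ x, f x ≠ ⊥) ∧ (∃ x, f x ≠ ⊤) ∧ EConvexOn' f ∧ LowerSemicontinuous f

/-- Effective domain of `f`. -/
def edom (f : X → EReal) : Set X := {x | f x ≠ ⊤}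

/-- The ε-subdifferential of `f` at `x` (a subset of the weak* dual);
it is empty when `ε < 0` or `f x ∉ ℝ`. -/
def esubdiff (f : X → EReal) (x : X) (ε : ℝ) : Set (WeakDual ℝ X) :=
  {p | 0 ≤ ε ∧ f x ≠ ⊤ ∧ f x ≠ ⊥ ∧
    ∀ y : X, f x + ((p y - p x - ε : ℝ) : EReal) ≤ f y}

/-- Normal cone to `A` at `x` (empty when `x ∉ A`). -/
def normalCone (A : Set X) (x : X) : Set (WeakDual ℝ X) :=
  {p | x ∈ A ∧ ∀ y ∈ A, p y - p x ≤ 0}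

/-- Recession cone of a set. -/
def recCone {V : Type*} [AddCommMonoid V] [Module ℝ V] (C : Set V) : Set V :=
  {y | ∃ c ∈ C, ∀ l : ℝ, 0 ≤ l → c + l • y ∈ C}

/-- Closed convex hull of a set. -/
def cclo {V : Type*} [AddCommMonoid V] [Module ℝ V] [TopologicalSpace V] (S : Set V) : Set V :=
  closure (convexHull ℝ S)

/-- `sMul l f` is the function `l·f`, with the convention `0·f = I_{dom f}`
(i.e. `(l·f) z = +∞` whenever `f z = +∞`). -/
def sMul (l : ℝ) (f : X → EReal) : X → EReal :=
  fun z => if f z = ⊤ then ⊤ else (l : EReal) * f z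

/-!
The first claim holds because `t ↦ f t x` is lower semicontinuous on the compact space `T`, so it
attains its infimum, which is finite since every `f t` is proper.

For the inclusion `⊇`, an `ε`-subgradient `r` of `f t` at `x` satisfies
`r (z - x) ≤ f z - inf_t f t x + ε` for `z ∈ dom f`, so the closed convex hull of the
`ε`-subdifferentials lies in a half-space whose recession directions are nonpositive on `z - x`.

For `⊆`, if `p ∈ N_{dom f}(x)` is not a recession direction, separating some `c + l • p` from the
closed convex hull yields `y` with `0 < p y` and `⟨·, y⟩` bounded above on every `∂_ε f_t(x)`.
Separating a segment from the closed convex epigraph of `f t` shows that such a bound forces `f t`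
to be finite at some point `x + s_t • y`, `s_t > 0`. Upper semicontinuity in `t` and compactness
of `T` then give one `s > 0` with `x + s • y ∈ dom f`, contradicting `p ∈ N_{dom f}(x)`.
-/

section Epigraph

variable {E : Type*}

def realEpigraph (f : E → EReal) : Set (E × ℝ) := {q | f q.1 ≤ q.2}

theorem LowerSemicontinuous.isClosed_realEpigraph [TopologicalSpace E] {f : E → EReal}
    (hf : LowerSemicontinuous f) : IsClosed (realEpigraph f) :=
  hf.isClosed_epigraph.preimage (continuous_id.prodMap continuous_coe_real_ereal)

variable [AddCommGroup E] [Module ℝ E]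

theorem EConvexOn'.le_coe_add {f : E → EReal} (hf : EConvexOn' f) {x y : E} {r s a b : ℝ}
    (hx : f x ≤ r) (hy : f y ≤ s) (ha : 0 ≤ a) (hb : 0 ≤ b) (hab : a + b = 1) :
    f (a • x + b • y) ≤ ((a * r + b * s : ℝ) : EReal) :=
  calc f (a • x + b • y) ≤ (a : EReal) * f x + (b : EReal) * f y := hf x y a b ha hb hab
    _ ≤ (a : EReal) * r + (b : EReal) * s := by gcongr
    _ = ((a * r + b * s : ℝ) : EReal) := by push_cast; rfl

theorem EConvexOn'.le_coe_of_le_of_le {f : E → EReal} (hf : EConvexOn' f) {x y : E} {M a b : ℝ}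
    (hx : f x ≤ M) (hy : f y ≤ M) (ha : 0 ≤ a) (hb : 0 ≤ b) (hab : a + b = 1) :
    f (a • x + b • y) ≤ M := by
  simpa [← add_mul, hab] using hf.le_coe_add hx hy ha hb hab

theorem EConvexOn'.convex_realEpigraph {f : E → EReal} (hf : EConvexOn' f) :
    Convex ℝ (realEpigraph f) := by
  rintro ⟨z₁, r₁⟩ h₁ ⟨z₂, r₂⟩ h₂ a b ha hb hab
  exact hf.le_coe_add h₁ h₂ ha hb hab

end Epigraph

section Compactness

variable {T : Type*} [TopologicalSpace T] [CompactSpace T]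

theorem exists_finset_forall_exists_le_of_upperSemicontinuous {α : Type*} {g : T → α → EReal}
    (husc : ∀ z, UpperSemicontinuous fun t => g t z) {z : T → α} (hz : ∀ t, g t (z t) ≠ ⊤) :
    ∃ F : Finset T, ∃ M : ℝ, ∀ t', ∃ t ∈ F, g t' (z t) ≤ M := by
  set U : T → Set T := fun t => (fun t' => g t' (z t)) ⁻¹' Iio ((g t (z t)).toReal + 1 : ℝ)
  have hU : ∀ t, t ∈ U t := fun t =>
    (EReal.le_coe_toReal (hz t)).trans_lt (EReal.coe_lt_coe_iff.2 (lt_add_one _))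
  obtain ⟨F, hF⟩ := isCompact_univ.elim_finite_subcover U
    (fun t => (husc (z t)).isOpen_preimage _) fun t _ => mem_iUnion.2 ⟨t, hU t⟩
  obtain ⟨M, hM⟩ := (F.image fun t => (g t (z t)).toReal + 1).bddAbove
  refine ⟨F, M, fun t' => ?_⟩
  obtain ⟨t, htF, ht'⟩ := mem_iUnion₂.1 (hF (mem_univ t'))
  exact ⟨t, htF, ht'.le.trans
    (EReal.coe_le_coe_iff.2 (hM (Finset.mem_coe.2 (Finset.mem_image_of_mem _ htF))))⟩

variable [Nonempty T] {E : Type*} [AddCommGroup E] [Module ℝ E]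

theorem exists_pos_iSup_ne_top {g : T → E → EReal} (hconv : ∀ t, EConvexOn' (g t))
    (husc : ∀ z, UpperSemicontinuous fun t => g t z) {x y : E} (hx : (⨆ t, g t x) ≠ ⊤)
    (hy : ∀ t, ∃ s : ℝ, 0 < s ∧ g t (x + s • y) ≠ ⊤) :
    ∃ s : ℝ, 0 < s ∧ (⨆ t, g t (x + s • y)) ≠ ⊤ := by
  choose s hs hsy using hy
  obtain ⟨F, M, hFM⟩ := exists_finset_forall_exists_le_of_upperSemicontinuous husc hsy
  have hF : F.Nonempty := let ⟨t, ht, _⟩ := hFM (Classical.arbitrary T); ⟨t, ht⟩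
  set s₀ := F.inf' hF s
  have hs₀ : 0 < s₀ := (Finset.lt_inf'_iff hF).2 fun t _ => hs t
  set B := max (⨆ t, g t x).toReal M
  have hxB : ∀ t, g t x ≤ B := fun t => (le_iSup (fun t => g t x) t).trans <|
    (EReal.le_coe_toReal hx).trans (EReal.coe_le_coe_iff.2 (le_max_left _ _))
  refine ⟨s₀, hs₀, ne_top_of_le_ne_top (EReal.coe_ne_top B) (iSup_le fun t' => ?_)⟩
  obtain ⟨t, htF, ht'⟩ := hFM t'
  have hratio : s₀ / s t ≤ 1 := (div_le_one (hs t)).2 (Finset.inf'_le s htF)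
  have hseg : x + s₀ • y = (1 - s₀ / s t) • x + (s₀ / s t) • (x + s t • y) := by
    rw [smul_add, smul_smul, div_mul_cancel₀ _ (hs t).ne', ← add_assoc, ← add_smul,
      sub_add_cancel, one_smul]
  rw [hseg]
  exact (hconv t').le_coe_of_le_of_le (hxB t')
    (ht'.trans (EReal.coe_le_coe_iff.2 (le_max_right _ _))) (by linarith)
    (div_nonneg hs₀.le (hs t).le) (sub_add_cancel _ _)

theorem LowerSemicontinuous.bot_lt_iInf {β : Type*} [CompleteLinearOrder β] {g : T → β}
    (hg : LowerSemicontinuous g) (hbot : ∀ t, g t ≠ ⊥) : ⊥ < ⨅ t, g t := by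
  obtain ⟨t₀, -, ht₀⟩ :=
    (hg.lowerSemicontinuousOn univ).exists_isMinOn univ_nonempty isCompact_univ
  exact (bot_lt_iff_ne_bot.2 (hbot t₀)).trans_le (le_iInf fun t => ht₀ (mem_univ t))

end Compactness

section Dual

variable {E : Type*} [AddCommGroup E] [Module ℝ E] [TopologicalSpace E]

instance WeakDual.instLocallyConvexSpace : LocallyConvexSpace ℝ (WeakDual ℝ E) :=
  WeakBilin.locallyConvexSpace

theorem WeakDual.exists_apply_lt_of_notMem {C : Set (WeakDual ℝ E)} (hconv : Convex ℝ C)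
    (hclosed : IsClosed C) {q : WeakDual ℝ E} (hq : q ∉ C) :
    ∃ y : E, ∃ u : ℝ, (∀ c ∈ C, c y < u) ∧ u < q y := by
  obtain ⟨φ, u, hC, hqu⟩ := geometric_hahn_banach_closed_point hconv hclosed hq
  obtain ⟨y, rfl⟩ := LinearMap.dualEmbedding_surjective (topDualPairing ℝ E) φ
  exact ⟨y, u, hC, hqu⟩

theorem apply_nonpos_of_mem_recCone_cclo {S : Set (WeakDual ℝ E)} {w : E} {K : ℝ}
    (hS : ∀ r ∈ S, r w ≤ K) {q : WeakDual ℝ E} (hq : q ∈ recCone (cclo S)) : q w ≤ 0 := by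
  have hhalf : cclo S ⊆ {r : WeakDual ℝ E | r w ≤ K} :=
    closure_minimal (convexHull_min hS (convex_halfSpace_le ⟨fun _ _ => rfl, fun _ _ => rfl⟩ K))
      (isClosed_le (WeakDual.eval_continuous w) continuous_const)
  obtain ⟨c, hcS, hc⟩ := hq
  have hcw : c w ≤ K := hhalf hcS
  by_contra! hpos
  have hl : (K - c w + 1) / q w * q w = K - c w + 1 := div_mul_cancel₀ _ hpos.ne'
  have hfar : c w + (K - c w + 1) / q w * q w ≤ K :=
    hhalf (hc _ (div_nonneg (by linarith) hpos.le))
  linarith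

theorem apply_sub_apply_le_of_mem_esubdiff {f : E → EReal} {x z : E} {ε a b : ℝ}
    {r : WeakDual ℝ E} (hr : r ∈ esubdiff f x ε) (hz : f z ≤ b) (hx : a ≤ f x) :
    r z - r x ≤ b - a + ε := by
  obtain ⟨-, -, -, h⟩ := hr
  have : ((a + (r z - r x - ε) : ℝ) : EReal) ≤ b := by
    rw [EReal.coe_add]
    exact (add_le_add_left hx _).trans ((h z).trans hz)
  linarith [EReal.coe_le_coe_iff.1 this]

theorem recCone_cclo_iUnion_esubdiff_subset_normalCone {T : Type*} {f : T → E → EReal} {x : E}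
    (hx : x ∈ edom fun z => ⨆ t, f t z) {m : ℝ} (hm : ∀ t, (m : EReal) ≤ f t x) (ε : ℝ) :
    recCone (cclo (⋃ t, esubdiff (f t) x ε)) ⊆ normalCone (edom fun z => ⨆ t, f t z) x := by
  refine fun q hq => ⟨hx, fun z hz => ?_⟩
  have hbound : ∀ r ∈ ⋃ t, esubdiff (f t) x ε, r (z - x) ≤ (⨆ t, f t z).toReal - m + ε := by
    simp only [mem_iUnion, map_sub]
    rintro r ⟨t, hr⟩
    exact apply_sub_apply_le_of_mem_esubdiff hr
      ((le_iSup (fun t => f t z) t).trans (EReal.le_coe_toReal hz)) (hm t)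
  simpa only [map_sub] using apply_nonpos_of_mem_recCone_cclo hbound hq

end Dual

section Subdifferential

variable {E : Type*} [AddCommGroup E] [Module ℝ E] [TopologicalSpace E]
  [IsTopologicalAddGroup E] [ContinuousSMul ℝ E] [LocallyConvexSpace ℝ E]

theorem exists_mem_esubdiff_of_disjoint_realEpigraph {f : E → EReal} (hf : Gamma0 f) {x : E}
    (hx : f x ≠ ⊤) {ε : ℝ} (hε : 0 ≤ ε) {K : Set (E × ℝ)} (hKc : IsCompact K)
    (hKconv : Convex ℝ K) (hxK : (x, (f x).toReal - ε) ∈ K)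
    (hdisj : Disjoint K (realEpigraph f)) :
    ∃ r ∈ esubdiff f x ε, ∀ q ∈ K, q.2 - (f x).toReal < r q.1 - r x := by
  obtain ⟨hbot, -, hconv, hlsc⟩ := hf
  obtain ⟨g, u, v, hgK, huv, hgepi⟩ := geometric_hahn_banach_compact_closed hKconv hKc
    hconv.convex_realEpigraph hlsc.isClosed_realEpigraph hdisj
  have hg : ∀ z ρ, g (z, ρ) = g (z, 0) + ρ * g (0, 1) := fun z ρ => by
    rw [← smul_eq_mul, ← map_smul, ← map_add]; simp
  set c := g (0, 1)
  have hfx : f x = ((f x).toReal : EReal) := (EReal.coe_toReal hx (hbot x)).symm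
  -- the hyperplane is not vertical, as it separates `(x, f x - ε)` from `(x, f x)`
  have hc : 0 < c := by
    have hK := hgK _ hxK
    have hepi := hgepi (x, (f x).toReal) hfx.le
    rw [hg] at hK hepi
    exact pos_of_mul_pos_right (by linarith : 0 < ε * c) hε
  set r : WeakDual ℝ E := ((-c⁻¹) • g.comp (ContinuousLinearMap.inl ℝ E ℝ) : E →L[ℝ] ℝ)
  have hsep : ∀ q ∈ K, ∀ z (ρ : ℝ), f z ≤ ρ → q.2 - ρ < r q.1 - r z := by
    rintro ⟨w, σ⟩ hq z ρ hzρ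
    have hlt := (hgK _ hq).trans (huv.trans (hgepi (z, ρ) hzρ))
    rw [hg w, hg z] at hlt
    have hr : r w - r z = (g (z, 0) - g (w, 0)) / c := by
      change -c⁻¹ * g (w, 0) - -c⁻¹ * g (z, 0) = _
      field_simp
      ring
    rw [hr, lt_div_iff₀ hc]
    linarith
  refine ⟨r, ⟨hε, hx, hbot x, fun y => ?_⟩, fun q hq => hsep q hq x _ hfx.le⟩
  rcases eq_or_ne (f y) ⊤ with hy | hy
  · simp [hy]
  have := hsep _ hxK y _ (EReal.le_coe_toReal hy)
  rw [hfx, ← EReal.coe_add]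
  exact (EReal.coe_le_coe_iff.2 (by linarith)).trans_eq (EReal.coe_toReal hy (hbot y))

theorem Gamma0.esubdiff_nonempty {f : E → EReal} (hf : Gamma0 f) {x : E} (hx : f x ≠ ⊤) {ε : ℝ}
    (hε : 0 < ε) : (esubdiff f x ε).Nonempty := by
  set a := (f x).toReal
  have hfx : f x = a := (EReal.coe_toReal hx (hf.1 x)).symm
  obtain ⟨r, hr, -⟩ := exists_mem_esubdiff_of_disjoint_realEpigraph hf hx hε.le
    isCompact_singleton (convex_singleton _) rfl <| Set.disjoint_singleton_left.2 fun h => by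
      have : f x ≤ (a - ε : ℝ) := h
      rw [hfx, EReal.coe_le_coe_iff] at this
      linarith
  exact ⟨r, hr⟩

theorem Gamma0.exists_mem_esubdiff_lt_apply {f : E → EReal} (hf : Gamma0 f) {x : E}
    (hx : f x ≠ ⊤) {ε : ℝ} (hε : 0 < ε) {y : E} (hy : ∀ s : ℝ, 0 < s → f (x + s • y) = ⊤)
    (b : ℝ) : ∃ r ∈ esubdiff f x ε, b < r y := by
  set a := (f x).toReal
  have hfx : f x = a := (EReal.coe_toReal hx (hf.1 x)).symm
  have hdisj : Disjoint (segment ℝ (x, a - ε) (x + y, a + b)) (realEpigraph f) := by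
    rw [Set.disjoint_left, segment_eq_image']
    rintro _ ⟨θ, ⟨hθ, -⟩, rfl⟩ hepi
    simp only [realEpigraph, Set.mem_ofPred_eq, Prod.fst_add, Prod.snd_add, Prod.smul_fst,
      Prod.smul_snd, Prod.fst_sub, Prod.snd_sub, add_sub_cancel_left, smul_eq_mul] at hepi
    rcases hθ.eq_or_lt with rfl | hθ
    · rw [zero_smul, add_zero, hfx, EReal.coe_le_coe_iff] at hepi
      linarith
    · rw [hy θ hθ] at hepi
      exact hepi.not_gt (EReal.coe_lt_top _)
  obtain ⟨r, hr, hrK⟩ := exists_mem_esubdiff_of_disjoint_realEpigraph hf hx hε.le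
    (convexHull_pair (𝕜 := ℝ) (E := E × ℝ) _ _ ▸ (Set.toFinite _).isCompact_convexHull ℝ)
    (convex_segment _ _) (left_mem_segment _ _ _) hdisj
  refine ⟨r, hr, ?_⟩
  simpa [a] using hrK _ (right_mem_segment _ _ _)

theorem normalCone_subset_recCone_cclo_iUnion_esubdiff {T : Type*} [TopologicalSpace T]
    [CompactSpace T] [Nonempty T] {f : T → E → EReal} (hf : ∀ t, Gamma0 (f t))
    (husc : ∀ z, UpperSemicontinuous fun t => f t z) {x : E}
    (hx : x ∈ edom fun z => ⨆ t, f t z) {ε : ℝ} (hε : 0 < ε) :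
    normalCone (edom fun z => ⨆ t, f t z) x ⊆ recCone (cclo (⋃ t, esubdiff (f t) x ε)) := by
  rintro p ⟨-, hp⟩
  have hfx : ∀ t, f t x ≠ ⊤ := fun t => ne_top_of_le_ne_top hx (le_iSup (fun t => f t x) t)
  have hsub : ∀ t, esubdiff (f t) x ε ⊆ cclo (⋃ t, esubdiff (f t) x ε) := fun t =>
    (subset_iUnion (fun t => esubdiff (f t) x ε) t).trans
      ((subset_convexHull ℝ _).trans subset_closure)
  obtain ⟨c, hc⟩ := (hf (Classical.arbitrary T)).esubdiff_nonempty (hfx _) hε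
  refine ⟨c, hsub _ hc, fun l hl => ?_⟩
  by_contra hnot
  obtain ⟨y, u, hCu, hu⟩ :=
    WeakDual.exists_apply_lt_of_notMem (convex_convexHull ℝ _).closure isClosed_closure hnot
  have hpy : 0 < p y := by
    have hcu := hCu c (hsub _ hc)
    have hcl : (c + l • p) y = c y + l * p y := rfl
    exact pos_of_mul_pos_right (by linarith) hl
  -- otherwise `∂_ε f t x` would contain functionals exceeding `u` at `y`
  have hray : ∀ t, ∃ s : ℝ, 0 < s ∧ f t (x + s • y) ≠ ⊤ := by
    intro t
    by_contra! htop
    obtain ⟨r, hr, hur⟩ := (hf t).exists_mem_esubdiff_lt_apply (hfx t) hε htop u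
    exact (hCu r (hsub t hr)).not_gt hur
  obtain ⟨s, hs, hdom⟩ := exists_pos_iSup_ne_top (fun t => (hf t).2.2.1) husc hx hray
  have hps := hp _ hdom
  rw [map_add, map_smul, smul_eq_mul, add_sub_cancel_left] at hps
  exact (mul_pos hs hpy).not_ge hps

end Subdifferential

theorem statement10_general {T : Type*} [TopologicalSpace T] [CompactSpace T] [Nonempty T]
    (f : T → X → EReal) (hf : ∀ t, Gamma0 (f t))
    (husc : ∀ z : X, UpperSemicontinuous fun t => f t z)
    (x : X) (hx : x ∈ edom (fun z => ⨆ t, f t z))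
    (hlsc : LowerSemicontinuous fun t => f t x) :
    ((⊥ : EReal) < ⨅ t, f t x) ∧
    (∀ ε : ℝ, 0 < ε →
      normalCone (edom (fun z => ⨆ t, f t z)) x =
        recCone (cclo (⋃ t, esubdiff (f t) x ε))) := by
  have hinf : ⊥ < ⨅ t, f t x := hlsc.bot_lt_iInf fun t => (hf t).1 x
  obtain ⟨m, -, hm⟩ := EReal.exists_between_coe_real hinf
  refine ⟨hinf, fun ε hε => ?_⟩
  exact (normalCone_subset_recCone_cclo_iUnion_esubdiff hf husc hx hε).antisymm
    (recCone_cclo_iUnion_esubdiff_subset_normalCone hx (fun t => hm.le.trans (iInf_le _ t)) ε)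

/-- under (SH), if additionally `t ↦ f_t(x)` is lsc on `T`, then
`inf_t f_t(x) > −∞` and consequently the normal cone formula holds for every `ε > 0`. -/
theorem statement10 {T : Type*} [TopologicalSpace T] [CompactSpace T] [T2Space T] [Nonempty T]
    (f : T → X → EReal) (hf : ∀ t, Gamma0 (f t))
    (husc : ∀ z : X, UpperSemicontinuous fun t => f t z)
    (x : X) (hx : x ∈ edom (fun z => ⨆ t, f t z))
    (hlsc : LowerSemicontinuous fun t => f t x) :
    ((⊥ : EReal) < ⨅ t, f t x) ∧
    (∀ ε : ℝ, 0 < ε →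
      normalCone (edom (fun z => ⨆ t, f t z)) x =
        recCone (cclo (⋃ t, esubdiff (f t) x ε))) :=
  statement10_general f hf husc x hx hlsc
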